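/- For every θ ∈ θ_p: 2^{N−1}·∏_{θ'∈θ_p, θ'≠θ} sin((θ−θ')/2) = (−1)^{N−1}·N·cos(Nθ/2); and for every θ ∈ θ_a: 2^{N−1}·∏_{θ'∈θ_a, θ'≠θ} sin((θ−θ')/2) = (−1)^{N−1}·N·sin(Nθ/2). -/

import Mathlib

/-!
Both formulas reduce, through `(θ_j - θ_k) / 2 = π (j - k) / N`, to
`2 ^ (N - 1) * ∏_{k ≠ j} sin (π (j - k) / N) = (-1) ^ (N - 1 - j) * N`.
For `ζ = exp (2πi / N)` one has `|2 sin (π (j - k) / N)| = |ζ ^ j - ζ ^ k|`, and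
`∏_{k ≠ j} (ζ ^ j - ζ ^ k)` is the derivative of `X ^ N - 1 = ∏_k (X - ζ ^ k)` at `ζ ^ j`,
namely `N ζ ^ (j (N - 1))`, of modulus `N`. The sign is that of the `N - 1 - j` negative
factors, those with `k > j`.
-/

open Finset

noncomputable section

/-- Antiperiodic momenta: θ_a = {(2j−1)π/N : j = 1,…,N}. -/
def thetaA (N : ℕ) (j : Fin N) : ℝ := (2 * (j : ℝ) + 1) * Real.pi / N

/-- Periodic momenta: θ_p = {2(j−1)π/N : j = 1,…,N}. -/
def thetaP (N : ℕ) (j : Fin N) : ℝ := (2 * (j : ℝ)) * Real.pi / N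

open Polynomial in
theorem IsPrimitiveRoot.prod_erase_pow_sub_pow {R : Type*} [CommRing R] [IsDomain R] {N : ℕ}
    {ζ : R} (hζ : IsPrimitiveRoot ζ N) (j : Fin N) :
    ∏ k ∈ univ.erase j, (ζ ^ (j : ℕ) - ζ ^ (k : ℕ)) = N * ζ ^ ((j : ℕ) * (N - 1)) := by
  have hnodal : Lagrange.nodal univ (fun k : Fin N ↦ ζ ^ (k : ℕ)) = X ^ N - 1 := by
    rw [Lagrange.nodal_eq, Fin.prod_univ_eq_prod_range (fun k ↦ X - C (ζ ^ k)), ← C_1,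
      X_pow_sub_C_eq_prod hζ j.pos (one_pow N)]
    simp
  rw [← Lagrange.eval_nodal,
    ← Lagrange.eval_nodal_derivative_eval_node_eq (v := fun k : Fin N ↦ ζ ^ (k : ℕ))
      (mem_univ j), hnodal]
  simp [derivative_X_pow, pow_mul]

theorem Complex.norm_exp_I_mul_ofReal_sub_exp_I_mul_ofReal (x y : ℝ) :
    ‖exp (I * x) - exp (I * y)‖ = |2 * Real.sin ((x - y) / 2)| := by
  rw [← Real.norm_eq_abs, ← norm_exp_I_mul_ofReal_sub_one, ← one_mul ‖_ - 1‖,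
    ← norm_exp_I_mul_ofReal y, ← norm_mul, mul_sub, mul_one, ← exp_add]
  push_cast
  ring_nf

theorem Fin.prod_erase_eq_neg_one_pow_mul_prod_abs {R : Type*} [CommRing R] [LinearOrder R]
    [IsStrictOrderedRing R] {N : ℕ} (f : Fin N → R) (j : Fin N)
    (hlt : ∀ k < j, 0 ≤ f k) (hgt : ∀ k, j < k → f k ≤ 0) :
    ∏ k ∈ univ.erase j, f k = (-1) ^ (N - 1 - j) * ∏ k ∈ univ.erase j, |f k| := by
  have hsign : ∀ k ∈ univ.erase j, f k = (if j < k then -1 else 1) * |f k| := by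
    intro k hk
    rcases lt_trichotomy k j with h | h | h
    · simp [not_lt.2 h.le, abs_of_nonneg (hlt k h)]
    · simp [h] at hk
    · simp [h, abs_of_nonpos (hgt k h)]
  rw [prod_congr rfl hsign, prod_mul_distrib, prod_ite, prod_const_one, Finset.prod_const,
    mul_one, ← Fin.card_Ioi j]
  congr 3
  ext k
  simpa using fun h : j < k ↦ h.ne'

open Real in
theorem prod_erase_abs_two_mul_sin_pi_mul_sub_div {N : ℕ} (j : Fin N) :
    ∏ k ∈ univ.erase j, |2 * sin (π * ((j : ℝ) - k) / N)| = N := by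
  have hN : N ≠ 0 := j.pos.ne'
  set ζ := Complex.exp (2 * π * Complex.I / N)
  have hζ : IsPrimitiveRoot ζ N := Complex.isPrimitiveRoot_exp N hN
  have hpow (k : Fin N) : ζ ^ (k : ℕ) = Complex.exp (Complex.I * ↑(2 * π * k / N)) := by
    rw [← Complex.exp_nat_mul]
    push_cast
    ring_nf
  calc ∏ k ∈ univ.erase j, |2 * sin (π * ((j : ℝ) - k) / N)|
      = ∏ k ∈ univ.erase j, ‖ζ ^ (j : ℕ) - ζ ^ (k : ℕ)‖ := by
        refine prod_congr rfl fun k _ ↦ ?_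
        rw [hpow, hpow, Complex.norm_exp_I_mul_ofReal_sub_exp_I_mul_ofReal]
        ring_nf
    _ = N := by
        rw [← norm_prod, hζ.prod_erase_pow_sub_pow, norm_mul, norm_pow, hζ.norm'_eq_one hN]
        simp

open Real in
theorem two_pow_mul_prod_erase_sin_pi_mul_sub_div {N : ℕ} (j : Fin N) :
    2 ^ (N - 1) * ∏ k ∈ univ.erase j, sin (π * ((j : ℝ) - k) / N) =
      (-1) ^ (N - 1 - j) * N := by
  have hN : (0 : ℝ) < N := by exact_mod_cast j.pos
  have hlt (k : Fin N) (hk : k < j) : 0 ≤ 2 * sin (π * ((j : ℝ) - k) / N) := by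
    have hkj : (k : ℝ) < j := by exact_mod_cast hk
    have hj : (j : ℝ) < N := by exact_mod_cast j.isLt
    refine mul_nonneg zero_le_two (sin_nonneg_of_nonneg_of_le_pi ?_ ?_)
    · exact div_nonneg (mul_nonneg pi_pos.le (sub_nonneg.2 hkj.le)) hN.le
    · rw [div_le_iff₀ hN]
      nlinarith [pi_pos, k.val.cast_nonneg (α := ℝ)]
  have hgt (k : Fin N) (hk : j < k) : 2 * sin (π * ((j : ℝ) - k) / N) ≤ 0 := by
    have hjk : (j : ℝ) < k := by exact_mod_cast hk
    have hk : (k : ℝ) < N := by exact_mod_cast k.isLt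
    refine mul_nonpos_of_nonneg_of_nonpos zero_le_two (sin_nonpos_of_nonpos_of_neg_pi_le ?_ ?_)
    · exact div_nonpos_of_nonpos_of_nonneg (mul_nonpos_of_nonneg_of_nonpos pi_pos.le
        (sub_nonpos.2 hjk.le)) hN.le
    · rw [le_div_iff₀ hN]
      nlinarith [pi_pos, j.val.cast_nonneg (α := ℝ)]
  calc 2 ^ (N - 1) * ∏ k ∈ univ.erase j, sin (π * ((j : ℝ) - k) / N)
      = ∏ k ∈ univ.erase j, 2 * sin (π * ((j : ℝ) - k) / N) := by
        rw [prod_mul_distrib, Finset.prod_const, card_erase_of_mem (mem_univ j), card_univ,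
          Fintype.card_fin]
    _ = (-1) ^ (N - 1 - j) * ∏ k ∈ univ.erase j, |2 * sin (π * ((j : ℝ) - k) / N)| :=
        Fin.prod_erase_eq_neg_one_pow_mul_prod_abs _ j hlt hgt
    _ = (-1) ^ (N - 1 - j) * N := by rw [prod_erase_abs_two_mul_sin_pi_mul_sub_div]

theorem punctured_momentum_product_formulas_general (N : ℕ) :
    (∀ j : Fin N,
        2 ^ (N - 1) *
            ∏ k ∈ univ.erase j, Real.sin ((thetaP N j - thetaP N k) / 2) =
          (-1 : ℝ) ^ (N - 1) * N * Real.cos (N * thetaP N j / 2)) ∧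
      ∀ j : Fin N,
        2 ^ (N - 1) *
            ∏ k ∈ univ.erase j, Real.sin ((thetaA N j - thetaA N k) / 2) =
          (-1 : ℝ) ^ (N - 1) * N * Real.sin (N * thetaA N j / 2) := by
  have hN (j : Fin N) : (N : ℝ) ≠ 0 := by exact_mod_cast j.pos.ne'
  have hsign (j : Fin N) :
      (-1 : ℝ) ^ (N - 1 - j) * N = (-1) ^ (N - 1) * N * (-1) ^ (j : ℕ) := by
    rw [mul_right_comm, ← pow_add, show N - 1 + j = (N - 1 - j) + 2 * j by omega, pow_add,
      pow_mul, neg_one_sq, one_pow, mul_one]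
  refine ⟨fun j ↦ ?_, fun j ↦ ?_⟩
  · have harg (k : Fin N) : (thetaP N j - thetaP N k) / 2 = Real.pi * ((j : ℝ) - k) / N := by
      unfold thetaP; ring
    have hphase : (N : ℝ) * thetaP N j / 2 = (j : ℕ) * Real.pi := by
      unfold thetaP; field_simp [hN j]
    simp_rw [harg, two_pow_mul_prod_erase_sin_pi_mul_sub_div, hphase, Real.cos_nat_mul_pi, hsign]
  · have harg (k : Fin N) : (thetaA N j - thetaA N k) / 2 = Real.pi * ((j : ℝ) - k) / N := by
      unfold thetaA; ring
    have hphase : (N : ℝ) * thetaA N j / 2 = (j : ℕ) * Real.pi + Real.pi / 2 := by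
      unfold thetaA; field_simp [hN j]
    simp_rw [harg, two_pow_mul_prod_erase_sin_pi_mul_sub_div, hphase, Real.sin_add_pi_div_two,
      Real.cos_nat_mul_pi, hsign]

/-- Product formulas over the punctured momentum sets: for θ ∈ θ_p,
2^{N−1}·∏_{θ'∈θ_p, θ'≠θ} sin((θ−θ')/2) = (−1)^{N−1}·N·cos(Nθ/2), and for
θ ∈ θ_a, 2^{N−1}·∏_{θ'∈θ_a, θ'≠θ} sin((θ−θ')/2) = (−1)^{N−1}·N·sin(Nθ/2). -/
theorem punctured_momentum_product_formulas (N : ℕ) (hN : 1 ≤ N) :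
    (∀ j : Fin N,
        2 ^ (N - 1) *
            ∏ k ∈ univ.erase j, Real.sin ((thetaP N j - thetaP N k) / 2) =
          (-1 : ℝ) ^ (N - 1) * N * Real.cos (N * thetaP N j / 2)) ∧
      ∀ j : Fin N,
        2 ^ (N - 1) *
            ∏ k ∈ univ.erase j, Real.sin ((thetaA N j - thetaA N k) / 2) =
          (-1 : ℝ) ^ (N - 1) * N * Real.sin (N * thetaA N j / 2) :=
  punctured_momentum_product_formulas_general N
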